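/- Let d2, a2, q > 0 and 0 ≤ x1 < L. If v : ℝ → ℝ is twice continuously differentiable and satisfies d2·v''(x) − a2·v'(x) − q·v(x) = 0 for all x ∈ [x1, L], together with the boundary conditions d2·v'(x1) − a2·v(x1) = 0 and v'(L) = 0, then v(x) = 0 for all x ∈ [x1, L]. Consequently, the upstream toxicant boundary value problem has at most one solution on [x1, L]. -/

import Mathlib

open Set Filter Topology

lemma homog_zero
    (d2 a2 q x1 L : ℝ)
    (hd2 : 0 < d2) (ha2 : 0 < a2) (hq : 0 < q) (hx1L : x1 < L)
    (v : ℝ → ℝ) (hv : ContDiff ℝ 2 v)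
    (hode : ∀ x ∈ Set.Icc x1 L,
        d2 * deriv (deriv v) x - a2 * deriv v x - q * v x = 0)
    (hbc1 : d2 * deriv v x1 - a2 * v x1 = 0) (hbc2 : deriv v L = 0) :
    ∀ x ∈ Set.Icc x1 L, v x = 0 := by
  have hvd : Differentiable ℝ v := hv.differentiable two_ne_zero
  have hv1 : ContDiff ℝ 1 (deriv v) := by
    have := (contDiff_succ_iff_deriv (n := 1)).mp hv
    exact this.2.2
  have hvd' : Differentiable ℝ (deriv v) := hv1.differentiable one_ne_zero
  set α : ℝ := a2 / d2 with hα
  have hda : d2 * α = a2 := by rw [hα]; field_simp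
  set G : ℝ → ℝ := fun x => d2 * Real.exp (-α * x) * (deriv v x * v x) with hGdef
  set g : ℝ → ℝ := fun x =>
    Real.exp (-α * x) *
      ((d2 * deriv (deriv v) x - a2 * deriv v x) * v x + d2 * (deriv v x) ^ 2)
    with hgdef
  have hG : ∀ x, HasDerivAt G (g x) x := by
    intro x
    have h1 : HasDerivAt v (deriv v x) x := (hvd x).hasDerivAt
    have h2 : HasDerivAt (deriv v) (deriv (deriv v) x) x := (hvd' x).hasDerivAt
    have he : HasDerivAt (fun y : ℝ => Real.exp (-α * y))
        (Real.exp (-α * x) * (-α)) x := by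
      simpa using ((hasDerivAt_id x).const_mul (-α)).exp
    have : HasDerivAt (fun y => d2 * Real.exp (-α * y) * (deriv v y * v y))
        (d2 * (Real.exp (-α * x) * -α) * (deriv v x * v x) +
          d2 * Real.exp (-α * x) * (deriv (deriv v) x * v x + deriv v x * deriv v x)) x :=
      (he.const_mul d2).mul (h2.mul h1)
    convert this using 1
    show g x = _
    simp only [hgdef]
    rw [← hda]
    ring
  have hGdiff : Differentiable ℝ G := fun x => (hG x).differentiableAt
  have hGcont : Continuous G := hGdiff.continuous
  have hGderiv : ∀ x, deriv G x = g x := fun x => (hG x).deriv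
  have hgnn : ∀ x ∈ Icc x1 L, 0 ≤ g x := by
    intro x hx
    have h := hode x hx
    have h2 : d2 * deriv (deriv v) x - a2 * deriv v x = q * v x := by linarith
    simp only [hgdef, h2]
    have h4 : 0 ≤ q * v x * v x + d2 * (deriv v x) ^ 2 := by
      nlinarith [mul_self_nonneg (v x), sq_nonneg (deriv v x)]
    exact mul_nonneg (Real.exp_pos _).le h4
  have hmono : MonotoneOn G (Icc x1 L) := by
    apply monotoneOn_of_deriv_nonneg (convex_Icc _ _) hGcont.continuousOn
    · exact hGdiff.differentiableOn
    · intro x hx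
      rw [interior_Icc] at hx
      rw [hGderiv]
      exact hgnn x (Ioo_subset_Icc_self hx)
  have hGL : G L = 0 := by simp [hGdef, hbc2]
  have hGx1 : G x1 = Real.exp (-α * x1) * (a2 * v x1 ^ 2) := by
    have h3 : d2 * deriv v x1 = a2 * v x1 := by linarith
    simp only [hGdef]
    rw [show d2 * Real.exp (-α * x1) * (deriv v x1 * v x1)
        = Real.exp (-α * x1) * (d2 * deriv v x1 * v x1) from by ring, h3]
    ring
  have hle : G x1 ≤ G L :=
    hmono (left_mem_Icc.mpr hx1L.le) (right_mem_Icc.mpr hx1L.le) hx1L.le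
  have hGx1nn : 0 ≤ G x1 := by
    rw [hGx1]; positivity
  have hGx10 : G x1 = 0 := le_antisymm (by linarith [hGL]) hGx1nn
  have hvx1 : v x1 = 0 := by
    rw [hGx1] at hGx10
    have he := Real.exp_pos (-α * x1)
    have : a2 * v x1 ^ 2 = 0 := by
      rcases mul_eq_zero.mp hGx10 with h | h
      · linarith
      · exact h
    have : v x1 ^ 2 = 0 := by
      rcases mul_eq_zero.mp this with h | h
      · linarith
      · exact h
    exact pow_eq_zero_iff (by norm_num) |>.mp this
  have hG0 : ∀ x ∈ Icc x1 L, G x = 0 := by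
    intro x hx
    have h1 := hmono (left_mem_Icc.mpr hx1L.le) hx hx.1
    have h2 := hmono hx (right_mem_Icc.mpr hx1L.le) hx.2
    linarith [hGL, hGx10]
  have hvIoo : ∀ x ∈ Ioo x1 L, v x = 0 := by
    intro x hx
    have hev : G =ᶠ[𝓝 x] fun _ => (0 : ℝ) :=
      Filter.eventually_of_mem (Ioo_mem_nhds hx.1 hx.2)
        (fun y hy => hG0 y (Ioo_subset_Icc_self hy))
    have hg0 : g x = 0 := by
      rw [← hGderiv, hev.deriv_eq, deriv_const]
    have hodex := hode x (Ioo_subset_Icc_self hx)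
    have h2 : d2 * deriv (deriv v) x - a2 * deriv v x = q * v x := by linarith
    rw [hgdef] at hg0
    simp only [h2] at hg0
    have he := Real.exp_pos (-α * x)
    have hsum : q * v x * v x + d2 * (deriv v x) ^ 2 = 0 := by
      rcases mul_eq_zero.mp hg0 with h | h
      · linarith
      · linarith [h]
    have ha' : v x * v x ≤ 0 := by nlinarith [sq_nonneg (deriv v x)]
    exact mul_self_eq_zero.mp (le_antisymm ha' (mul_self_nonneg _))
  have hvL : v L = 0 := by
    have hmem : Ioo x1 L ∈ 𝓝[<] L := Ioo_mem_nhdsLT_of_mem ⟨hx1L, le_refl L⟩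
    have t1 : Tendsto v (𝓝[<] L) (𝓝 (v L)) :=
      (hvd.continuous.tendsto L).mono_left nhdsWithin_le_nhds
    have t2 : Tendsto v (𝓝[<] L) (𝓝 0) := by
      apply tendsto_const_nhds.congr'
      exact (Filter.eventually_of_mem hmem (fun y hy => (hvIoo y hy).symm))
    exact tendsto_nhds_unique t1 t2
  intro x hx
  rcases eq_or_lt_of_le hx.1 with h | h
  · rw [← h]; exact hvx1
  rcases eq_or_lt_of_le hx.2 with h' | h'
  · rw [h']; exact hvL
  exact hvIoo x ⟨h, h'⟩

/-- `w` is a solution of the upstream toxicant boundary value problem with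
parameters `d2, a2, h, q` on the interval `[x1, L]`. -/
def IsUpstreamSolution (d2 a2 h q x1 L : ℝ) (w : ℝ → ℝ) : Prop :=
  ContDiff ℝ 2 w ∧
  (∀ x ∈ Set.Icc x1 L,
      d2 * deriv (deriv w) x - a2 * deriv w x + h - q * w x = 0) ∧
  d2 * deriv w x1 - a2 * w x1 = 0 ∧ deriv w L = 0

/-- the homogeneous upstream problem has only the trivial solution;
consequently the upstream toxicant boundary value problem has at most one
solution on `[x1, L]`. -/
theorem upstream_uniqueness
    (d2 a2 q x1 L : ℝ)
    (hd2 : 0 < d2) (ha2 : 0 < a2) (hq : 0 < q)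
    (hx1 : 0 ≤ x1) (hx1L : x1 < L) :
    (∀ v : ℝ → ℝ, ContDiff ℝ 2 v →
      (∀ x ∈ Set.Icc x1 L,
          d2 * deriv (deriv v) x - a2 * deriv v x - q * v x = 0) →
      d2 * deriv v x1 - a2 * v x1 = 0 → deriv v L = 0 →
      ∀ x ∈ Set.Icc x1 L, v x = 0) ∧
    (∀ h : ℝ, 0 < h → ∀ w1 w2 : ℝ → ℝ,
      IsUpstreamSolution d2 a2 h q x1 L w1 →
      IsUpstreamSolution d2 a2 h q x1 L w2 →
      ∀ x ∈ Set.Icc x1 L, w1 x = w2 x) := by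
  constructor
  · exact fun v hv hode hbc1 hbc2 =>
      homog_zero d2 a2 q x1 L hd2 ha2 hq hx1L v hv hode hbc1 hbc2
  · intro h hh w1 w2 hw1 hw2 x hx
    obtain ⟨hc1, hode1, hb1, hb1'⟩ := hw1
    obtain ⟨hc2, hode2, hb2, hb2'⟩ := hw2
    set v : ℝ → ℝ := fun y => w1 y - w2 y with hvdef
    have hcv : ContDiff ℝ 2 v := hc1.sub hc2
    have hd1 : Differentiable ℝ w1 := hc1.differentiable two_ne_zero
    have hd2' : Differentiable ℝ w2 := hc2.differentiable two_ne_zero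
    have hdd1 : Differentiable ℝ (deriv w1) :=
      ((contDiff_succ_iff_deriv (n := 1)).mp hc1).2.2.differentiable one_ne_zero
    have hdd2 : Differentiable ℝ (deriv w2) :=
      ((contDiff_succ_iff_deriv (n := 1)).mp hc2).2.2.differentiable one_ne_zero
    have hdv : deriv v = fun y => deriv w1 y - deriv w2 y :=
      funext fun y => deriv_sub (hd1 y) (hd2' y)
    have hddv : ∀ y, deriv (deriv v) y = deriv (deriv w1) y - deriv (deriv w2) y := by
      intro y
      rw [hdv]
      exact deriv_sub (hdd1 y) (hdd2 y)
    have hz : ∀ y ∈ Set.Icc x1 L, v y = 0 := by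
      apply homog_zero d2 a2 q x1 L hd2 ha2 hq hx1L v hcv
      · intro y hy
        have e1 := hode1 y hy
        have e2 := hode2 y hy
        rw [hddv y, hdv]
        simp only [hvdef]
        ring_nf
        ring_nf at e1 e2
        linarith
      · rw [hdv]
        simp only [hvdef]
        linarith
      · rw [hdv]
        simp only
        linarith
    have := hz x hx
    simpa [hvdef, sub_eq_zero] using this
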